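/- arXiv:1711.03908 — 4 statements merged into one kernel-verified Lean document; each statement's English description precedes it below -/
import Mathlib

section
/- Let X be a real-valued random variable with a normal distribution N(μ, σ²), and let I ⊆ ℝ be any Lebesgue-measurable set. Then P(X ∈ I) ≤ 2Φ(λ(I)/(2σ)) − 1, where Φ is the standard normal CDF and λ(I) is the Lebesgue measure of I. -/
open MeasureTheory Real Set ProbabilityTheory

/-! The Gaussian density is a decreasing function of `|x - μ|`. Let `J` be the interval centred
at `μ` with `λ(J) = λ(I)`. Then `I \ J` and `J \ I` have equal measure, and the density is at most
its value `c` at the endpoints of `J` on the former and at least `c` on the latter, so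
`P(X ∈ I) ≤ P(X ∈ J)` (the bathtub principle). Standardising, `P(X ∈ J)` is the standard normal
mass of `[-t, t]` with `t = λ(I)/(2σ)`, which is `2Φ(t) - 1` by symmetry. -/

theorem setIntegral_le_setIntegral_of_measure_eq {α : Type*} [MeasurableSpace α]
    {ν : Measure α} {f : α → ℝ} {I J : Set α} (hfI : IntegrableOn f I ν)
    (hfJ : IntegrableOn f J ν) (hI : MeasurableSet I) (hJ : MeasurableSet J)
    (hvol : ν I = ν J) (hIfin : ν I ≠ ⊤) (c : ℝ)
    (hle : ∀ x ∈ I \ J, f x ≤ c) (hge : ∀ x ∈ J \ I, c ≤ f x) :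
    ∫ x in I, f x ∂ν ≤ ∫ x in J, f x ∂ν := by
  have hdiff : ν (I \ J) = ν (J \ I) := measure_sdiff_symm hI.nullMeasurableSet
    hJ.nullMeasurableSet hvol (measure_ne_top_of_subset inter_subset_left hIfin)
  have hIJ : ν (I \ J) ≠ ⊤ := measure_ne_top_of_subset sdiff_subset hIfin
  rw [← integral_inter_add_sdiff hJ hfI, ← integral_inter_add_sdiff hI hfJ, inter_comm J I]
  gcongr _ + ?_
  calc ∫ x in I \ J, f x ∂ν ≤ ∫ _ in I \ J, c ∂ν :=
        setIntegral_mono_on (hfI.mono_set sdiff_subset) (integrableOn_const (C := c) hIJ)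
          (hI.diff hJ) hle
    _ = ∫ _ in J \ I, c ∂ν := by simp only [setIntegral_const, measureReal_def, hdiff]
    _ ≤ ∫ x in J \ I, f x ∂ν :=
        setIntegral_mono_on (integrableOn_const (C := c) (hdiff ▸ hIJ))
          (hfJ.mono_set sdiff_subset) (hJ.diff hI) hge

theorem gaussianPDFReal_le_of_abs_sub_le (μ : ℝ) (v : NNReal) {x y : ℝ}
    (h : |y - μ| ≤ |x - μ|) : gaussianPDFReal μ v x ≤ gaussianPDFReal μ v y := by
  unfold gaussianPDFReal
  gcongr _ * rexp (-?_ / _)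
  exact sq_le_sq.mpr h

theorem gaussianReal_le_gaussianReal_Icc (μ : ℝ) {v : NNReal} (hv : v ≠ 0) {I : Set ℝ}
    (hI : MeasurableSet I) (hIfin : volume I ≠ ⊤) :
    gaussianReal μ v I ≤
      gaussianReal μ v (Icc (μ - (volume I).toReal / 2) (μ + (volume I).toReal / 2)) := by
  set r := (volume I).toReal / 2
  have hr : 0 ≤ r := by positivity
  have hvol : volume I = volume (Icc (μ - r) (μ + r)) := by
    rw [Real.volume_Icc, show μ + r - (μ - r) = (volume I).toReal by ring,
      ENNReal.ofReal_toReal hIfin]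
  rw [gaussianReal_apply_eq_integral _ hv, gaussianReal_apply_eq_integral _ hv]
  refine ENNReal.ofReal_le_ofReal (setIntegral_le_setIntegral_of_measure_eq
    (integrable_gaussianPDFReal μ v).integrableOn (integrable_gaussianPDFReal μ v).integrableOn
    hI measurableSet_Icc hvol hIfin (gaussianPDFReal μ v (μ + r)) ?_ ?_)
  · rintro x ⟨-, hx⟩
    refine gaussianPDFReal_le_of_abs_sub_le μ v ?_
    rw [add_sub_cancel_left, abs_of_nonneg hr, le_abs]
    rw [mem_Icc, not_and_or, not_le, not_le] at hx
    rcases hx with hx | hx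
    exacts [Or.inr (by linarith), Or.inl (by linarith)]
  · rintro x ⟨hx, -⟩
    refine gaussianPDFReal_le_of_abs_sub_le μ v ?_
    rw [add_sub_cancel_left, abs_of_nonneg hr, abs_sub_le_iff]
    constructor <;> linarith [hx.1, hx.2]

theorem gaussianReal_Icc_eq_standard (μ : ℝ) {σ : ℝ} (hσ : 0 < σ) (r : ℝ) :
    gaussianReal μ (σ ^ 2).toNNReal (Icc (μ - r) (μ + r)) =
      gaussianReal 0 1 (Icc (-(r / σ)) (r / σ)) := by
  have hstd : (gaussianReal μ (σ ^ 2).toNNReal).map (fun x ↦ (x - μ) / σ) = gaussianReal 0 1 := by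
    rw [show (fun x ↦ (x - μ) / σ) = (· / σ) ∘ (· - μ) from rfl,
      ← Measure.map_map (by fun_prop) (by fun_prop), gaussianReal_map_sub_const,
      gaussianReal_map_div_const]
    congr 1
    · simp
    · ext
      simp [hσ.le, hσ.ne']
  rw [← hstd, Measure.map_apply (by fun_prop) measurableSet_Icc]
  congr 1
  ext x
  simp only [mem_preimage, mem_Icc, ← neg_div, div_le_div_iff_of_pos_right hσ]
  constructor <;> rintro ⟨h1, h2⟩ <;> constructor <;> linarith

theorem measureReal_Icc_neg_of_map_neg_eq (ν : Measure ℝ) [IsProbabilityMeasure ν]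
    (hν : ν.map (fun x ↦ -x) = ν) {t : ℝ} (ht : 0 ≤ t) :
    ν.real (Icc (-t) t) = 2 * ν.real (Iic t) - 1 := by
  have hsymm : ν.real (Iio (-t)) = ν.real (Ioi t) := by
    rw [← hν, map_measureReal_apply (by fun_prop) measurableSet_Ioi]
    congr 1
    ext x
    simp
  have hIcc : Icc (-t) t = Iic t \ Iio (-t) := by
    ext
    simp [and_comm]
  rw [hIcc, measureReal_sdiff (Iio_subset_Iic (by linarith)) measurableSet_Iio,
    hsymm, ← compl_Iic, measureReal_compl measurableSet_Iic, probReal_univ]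
  ring

theorem gaussianReal_real_eq_integral (μ : ℝ) {v : NNReal} (hv : v ≠ 0) (s : Set ℝ) :
    (gaussianReal μ v).real s = ∫ x in s, gaussianPDFReal μ v x := by
  rw [measureReal_def, gaussianReal_apply_eq_integral μ hv,
    ENNReal.toReal_ofReal (integral_nonneg fun x ↦ gaussianPDFReal_nonneg μ v x)]

/-- Gaussian anti-concentration: if `X ~ N(μ, σ²)` and `I ⊆ ℝ` is any Lebesgue-measurable set,
then `P(X ∈ I) ≤ 2Φ(λ(I)/(2σ)) − 1`, where `Φ` is the standard normal CDF and `λ` is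
Lebesgue measure. -/
theorem gaussian_anti_concentration
    {Ω : Type*} [MeasureSpace Ω] [IsProbabilityMeasure (ℙ : Measure Ω)]
    (μ σ : ℝ) (hσ : 0 < σ)
    (X : Ω → ℝ) (hX : Measure.map X ℙ = gaussianReal μ ((σ ^ 2).toNNReal))
    (I : Set ℝ) (hI : MeasurableSet I) (hIfin : volume I ≠ ⊤)
    (Φ : ℝ → ℝ)
    (hΦ : ∀ t, Φ t = ∫ x in Set.Iic t, (Real.sqrt (2 * Real.pi))⁻¹ * Real.exp (-x ^ 2 / 2)) :
    (ℙ {ω | X ω ∈ I}).toReal ≤ 2 * Φ ((volume I).toReal / (2 * σ)) - 1 := by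
  have hv : (σ ^ 2).toNNReal ≠ 0 := by simpa using hσ.ne'
  have hΦ_std : ∀ t, Φ t = (gaussianReal 0 1).real (Iic t) := fun t ↦ by
    simp [hΦ, gaussianReal_real_eq_integral, gaussianPDFReal]
  have hlaw : ℙ {ω | X ω ∈ I} = gaussianReal μ (σ ^ 2).toNNReal I := by
    rw [← hX, Measure.map_apply_of_aemeasurable
      (aemeasurable_of_map_neZero (by rw [hX]; infer_instance)) hI]
    rfl
  set L := (volume I).toReal
  calc (ℙ {ω | X ω ∈ I}).toReal
      ≤ (gaussianReal μ (σ ^ 2).toNNReal (Icc (μ - L / 2) (μ + L / 2))).toReal := by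
        rw [hlaw]
        exact ENNReal.toReal_mono (measure_ne_top _ _)
          (gaussianReal_le_gaussianReal_Icc μ hv hI hIfin)
    _ = (gaussianReal 0 1).real (Icc (-(L / (2 * σ))) (L / (2 * σ))) := by
        rw [gaussianReal_Icc_eq_standard μ hσ, div_div]
        rfl
    _ = 2 * Φ (L / (2 * σ)) - 1 := by
        rw [measureReal_Icc_neg_of_map_neg_eq _ (by rw [gaussianReal_map_neg, neg_zero])
          (by positivity), hΦ_std]
end

section
/- Let q(p) = Φ⁻¹(1 − p/2). For any α ∈ (0, 1/2) and 0 < Δ < α, there is a universal constant c > 0 such that q(α + Δ) ≥ q(α) − c·Δ/α. -/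
/-! With `a = q(α + Δ)` and `b = q(α)`, both nonnegative, the Gaussian mass between `a` and `b`
is `Δ/2`; as the density `φ` decreases on `[0, ∞)`, this mass is at least `(b - a) φ(b)`. The
mass `α/2` beyond `b` is at most `φ(b) / (2 φ(1))`: by Mills' inequality if `b ≥ 1`, and
because `φ(b) ≥ φ(1)` if `b ≤ 1`. Hence `φ(1) α ≤ φ(b)` and `b - a ≤ Δ / (2 φ(1) α)`. -/

open MeasureTheory Real Set ProbabilityTheory Filter Topology NNReal

namespace ProbabilityTheory

lemma gaussianPDFReal_zero_one_apply (x : ℝ) :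
    gaussianPDFReal 0 1 x = (√(2 * π))⁻¹ * exp (-x ^ 2 / 2) := by
  simp [gaussianPDFReal]

lemma gaussianPDFReal_le (μ : ℝ) (v : ℝ≥0) (x : ℝ) :
    gaussianPDFReal μ v x ≤ (√(2 * π * v))⁻¹ := by
  rw [gaussianPDFReal]
  refine mul_le_of_le_one_right (by positivity) (exp_le_one_iff.2 ?_)
  exact div_nonpos_of_nonpos_of_nonneg (neg_nonpos.2 (sq_nonneg _)) (by positivity)

lemma gaussianPDFReal_antitoneOn (μ : ℝ) (v : ℝ≥0) :
    AntitoneOn (gaussianPDFReal μ v) (Ici μ) := fun x hx y _ hxy => by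
  simp only [gaussianPDFReal]
  gcongr
  exact sub_nonneg.2 hx

lemma hasDerivAt_gaussianPDFReal (μ : ℝ) (v : ℝ≥0) (x : ℝ) :
    HasDerivAt (gaussianPDFReal μ v) (-((x - μ) / v) * gaussianPDFReal μ v x) x := by
  have hexp : HasDerivAt (fun y => -(y - μ) ^ 2 / (2 * v)) (-((x - μ) / v)) x := by
    refine ((((hasDerivAt_id x).sub_const μ).pow 2).neg.div_const (2 * (v : ℝ))).congr_deriv ?_
    simp only [id]
    ring
  refine (hexp.exp.const_mul (√(2 * π * v))⁻¹).congr_deriv ?_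
  rw [gaussianPDFReal]
  ring

lemma tendsto_gaussianPDFReal_atTop (μ : ℝ) (v : ℝ≥0) :
    Tendsto (gaussianPDFReal μ v) atTop (𝓝 0) := by
  rcases eq_or_ne v 0 with rfl | hv
  · exact tendsto_const_nhds.congr fun x => by simp
  have hsq : Tendsto (fun x : ℝ => (x - μ) ^ 2 / (2 * v)) atTop atTop :=
    ((tendsto_pow_atTop two_ne_zero).comp (tendsto_atTop_add_const_right _ (-μ) tendsto_id)
      |>.atTop_div_const (by positivity))
  simpa [gaussianPDFReal_def, neg_div] using
    ((tendsto_exp_atBot.comp (tendsto_neg_atTop_atBot.comp hsq)).const_mul (√(2 * π * v))⁻¹)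

lemma monotone_integral_Iic_gaussianPDFReal (μ : ℝ) (v : ℝ≥0) :
    Monotone fun t => ∫ x in Iic t, gaussianPDFReal μ v x := fun _ _ hst =>
  setIntegral_mono_set (integrable_gaussianPDFReal μ v).integrableOn
    (ae_of_all _ (gaussianPDFReal_nonneg μ v)) (ae_of_all _ (Iic_subset_Iic.2 hst))

lemma integral_Ioi_gaussianPDFReal (μ : ℝ) {v : ℝ≥0} (hv : v ≠ 0) (t : ℝ) :
    ∫ x in Ioi t, gaussianPDFReal μ v x = 1 - ∫ x in Iic t, gaussianPDFReal μ v x := by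
  rw [← integral_gaussianPDFReal_eq_one μ hv, ← intervalIntegral.integral_Iic_add_Ioi
    (integrable_gaussianPDFReal μ v).integrableOn (integrable_gaussianPDFReal μ v).integrableOn]
  ring

lemma integral_Ioc_gaussianPDFReal {a b : ℝ} (μ : ℝ) (v : ℝ≥0) (hab : a ≤ b) :
    ∫ x in Ioc a b, gaussianPDFReal μ v x =
      (∫ x in Iic b, gaussianPDFReal μ v x) - ∫ x in Iic a, gaussianPDFReal μ v x := by
  rw [← intervalIntegral.integral_of_le hab, ← intervalIntegral.integral_Iic_sub_Iic
    (integrable_gaussianPDFReal μ v).integrableOn (integrable_gaussianPDFReal μ v).integrableOn]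

lemma sub_mul_gaussianPDFReal_le_integral_Ioc {μ a b : ℝ} (v : ℝ≥0) (hμa : μ ≤ a)
    (hab : a ≤ b) :
    (b - a) * gaussianPDFReal μ v b ≤ ∫ x in Ioc a b, gaussianPDFReal μ v x := by
  calc (b - a) * gaussianPDFReal μ v b = ∫ _ in Ioc a b, gaussianPDFReal μ v b := by
        rw [setIntegral_const, Real.volume_real_Ioc_of_le hab, smul_eq_mul]
    _ ≤ ∫ x in Ioc a b, gaussianPDFReal μ v x :=
        setIntegral_mono_on (integrableOn_const measure_Ioc_lt_top.ne)
          (integrable_gaussianPDFReal μ v).integrableOn measurableSet_Ioc fun x hx =>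
            gaussianPDFReal_antitoneOn μ v (hμa.trans hx.1.le) (hμa.trans hab) hx.2

lemma integral_Iic_zero_gaussianPDFReal_zero_one :
    ∫ x in Iic 0, gaussianPDFReal 0 1 x = 1 / 2 := by
  have hsymm : ∫ x in Iic 0, gaussianPDFReal 0 1 x = ∫ x in Ioi 0, gaussianPDFReal 0 1 x := by
    simpa [gaussianPDFReal] using integral_comp_neg_Iic 0 (gaussianPDFReal 0 1)
  linarith [integral_Ioi_gaussianPDFReal 0 one_ne_zero 0]

lemma integral_Ioi_mul_gaussianPDFReal_zero_one {t : ℝ} (ht : 0 ≤ t) :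
    IntegrableOn (fun x => x * gaussianPDFReal 0 1 x) (Ioi t) ∧
      ∫ x in Ioi t, x * gaussianPDFReal 0 1 x = gaussianPDFReal 0 1 t := by
  have hderiv : ∀ x ∈ Ici t,
      HasDerivAt (fun y => -gaussianPDFReal 0 1 y) (x * gaussianPDFReal 0 1 x) x :=
    fun x _ => (hasDerivAt_gaussianPDFReal 0 1 x).neg.congr_deriv (by simp)
  have hnonneg : ∀ x ∈ Ioi t, 0 ≤ x * gaussianPDFReal 0 1 x := fun x hx =>
    mul_nonneg (ht.trans hx.out.le) (gaussianPDFReal_nonneg 0 1 x)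
  have hlim := (tendsto_gaussianPDFReal_atTop 0 1).neg
  rw [neg_zero] at hlim
  refine ⟨integrableOn_Ioi_deriv_of_nonneg' hderiv hnonneg hlim, ?_⟩
  rw [integral_Ioi_of_hasDerivAt_of_nonneg' hderiv hnonneg hlim, zero_sub, neg_neg]

lemma integral_Ioi_gaussianPDFReal_zero_one_le_div {t : ℝ} (ht : 0 < t) :
    ∫ x in Ioi t, gaussianPDFReal 0 1 x ≤ gaussianPDFReal 0 1 t / t := by
  obtain ⟨hint, hval⟩ := integral_Ioi_mul_gaussianPDFReal_zero_one ht.le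
  calc ∫ x in Ioi t, gaussianPDFReal 0 1 x ≤ ∫ x in Ioi t, x * gaussianPDFReal 0 1 x / t :=
        setIntegral_mono_on (integrable_gaussianPDFReal 0 1).integrableOn (hint.div_const t)
          measurableSet_Ioi fun x hx => by
            rw [le_div_iff₀ ht, mul_comm]
            exact mul_le_mul_of_nonneg_right hx.out.le (gaussianPDFReal_nonneg 0 1 x)
    _ = gaussianPDFReal 0 1 t / t := by rw [integral_div, hval]

lemma integral_Ioi_gaussianPDFReal_zero_one_le {t : ℝ} (ht : 0 ≤ t) :
    ∫ x in Ioi t, gaussianPDFReal 0 1 x ≤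
      gaussianPDFReal 0 1 t / (2 * gaussianPDFReal 0 1 1) := by
  have hpos : 0 < gaussianPDFReal 0 1 1 := gaussianPDFReal_pos 0 1 1 one_ne_zero
  rw [le_div_iff₀ (by positivity)]
  rcases le_or_gt 1 t with h1t | ht1
  · have hhalf : gaussianPDFReal 0 1 1 ≤ 1 / 2 := by
      refine (gaussianPDFReal_le 0 1 1).trans ?_
      rw [NNReal.coe_one, mul_one, one_div, inv_le_inv₀ (by positivity) two_pos,
        Real.le_sqrt zero_le_two (by positivity)]
      nlinarith [pi_gt_three]
    have hmills : ∫ x in Ioi t, gaussianPDFReal 0 1 x ≤ gaussianPDFReal 0 1 t :=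
      (integral_Ioi_gaussianPDFReal_zero_one_le_div (by linarith)).trans
        (div_le_self (gaussianPDFReal_nonneg 0 1 t) h1t)
    have hI : 0 ≤ ∫ x in Ioi t, gaussianPDFReal 0 1 x :=
      setIntegral_nonneg measurableSet_Ioi fun x _ => gaussianPDFReal_nonneg 0 1 x
    nlinarith
  · have hhalf : ∫ x in Ioi t, gaussianPDFReal 0 1 x ≤ 1 / 2 := by
      rw [integral_Ioi_gaussianPDFReal 0 one_ne_zero]
      linarith [monotone_integral_Iic_gaussianPDFReal 0 1 ht,
        integral_Iic_zero_gaussianPDFReal_zero_one]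
    have := gaussianPDFReal_antitoneOn 0 1 ht (mem_Ici.2 zero_le_one) ht1.le
    nlinarith

end ProbabilityTheory

/-- For the two-sided standard normal quantile function `q(p) = Φ⁻¹(1 - p/2)`, there is a
universal constant `c > 0` such that for all `α ∈ (0,1/2)` and `0 < Δ < α`,
`q(α + Δ) ≥ q(α) - c·Δ/α`. -/
theorem gaussian_quantile_shift_lower
    (Φ : ℝ → ℝ)
    (hΦ : ∀ t, Φ t = ∫ x in Set.Iic t, (Real.sqrt (2 * Real.pi))⁻¹ * Real.exp (-x ^ 2 / 2))
    (q : ℝ → ℝ)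
    (hq : ∀ p ∈ Set.Ioo (0 : ℝ) 1, Φ (q p) = 1 - p / 2) :
    ∃ c > (0 : ℝ), ∀ α Δ : ℝ, α ∈ Set.Ioo (0 : ℝ) (1 / 2) → 0 < Δ → Δ < α →
      q (α + Δ) ≥ q α - c * Δ / α := by
  set φ := gaussianPDFReal 0 1
  have hΦφ : ∀ t, Φ t = ∫ x in Iic t, φ x := fun t => by
    simp only [hΦ, φ, gaussianPDFReal_zero_one_apply]
  have hφ1 : 0 < φ 1 := gaussianPDFReal_pos 0 1 1 one_ne_zero
  refine ⟨(2 * φ 1)⁻¹, by positivity, fun α Δ ⟨hα0, hα⟩ hΔ hΔα => ?_⟩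
  set a := q (α + Δ)
  set b := q α
  have ha : Φ a = 1 - (α + Δ) / 2 := hq _ ⟨by linarith, by linarith⟩
  have hb : Φ b = 1 - α / 2 := hq _ ⟨hα0, by linarith⟩
  have ha0 : 0 ≤ a := (monotone_integral_Iic_gaussianPDFReal 0 1).reflect_lt
    (by rw [integral_Iic_zero_gaussianPDFReal_zero_one, ← hΦφ, ha]; linarith) |>.le
  have hab : a ≤ b := (monotone_integral_Iic_gaussianPDFReal 0 1).reflect_lt
    (by rw [← hΦφ, ← hΦφ, ha, hb]; linarith) |>.le
  have hshift : (b - a) * φ b ≤ Δ / 2 := calc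
    (b - a) * φ b ≤ ∫ x in Ioc a b, φ x := sub_mul_gaussianPDFReal_le_integral_Ioc 1 ha0 hab
    _ = Δ / 2 := by rw [integral_Ioc_gaussianPDFReal 0 1 hab, ← hΦφ, ← hΦφ, ha, hb]; ring
  have htail : α / 2 ≤ φ b / (2 * φ 1) := calc
    α / 2 = ∫ x in Ioi b, φ x := by
      rw [integral_Ioi_gaussianPDFReal 0 one_ne_zero, ← hΦφ, hb]; ring
    _ ≤ φ b / (2 * φ 1) := integral_Ioi_gaussianPDFReal_zero_one_le (ha0.trans hab)
  rw [div_le_div_iff₀ two_pos (by positivity)] at htail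
  rw [ge_iff_le, sub_le_comm, inv_mul_eq_div, div_div, le_div_iff₀ (by positivity)]
  nlinarith
end

section
/- Let T_n be a t-distributed random variable with n degrees of freedom, where T_n = Z/√(Y/n) with Z standard normal and Y ~ χ²(n) independent. If n ≥ (64/9)·log(2/α), then P(T_n ≥ √(8 log(2/α))) ≤ α. -/
/-!
If `Z / √(Y / n) ≥ 2s` then either `Z ≥ s` or `Y ≤ n / 4`, since otherwise `√(Y / n) > 1 / 2`.
With `s = √(2 log (2 / α))` the Gaussian tail gives `P(Z ≥ s) ≤ e^{-s²/2} = α / 2`, and an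
exponential tilt of the Gamma density gives `P(Y ≤ n / 4) ≤ e^{-9n/64} ≤ α / 2`.
-/

open MeasureTheory Real Set ProbabilityTheory
open scoped NNReal

lemma measure_preimage_eq_of_map_eq {Ω : Type*} [MeasurableSpace Ω] {μ : Measure Ω}
    {ν : Measure ℝ} [NeZero ν] {X : Ω → ℝ} (hX : μ.map X = ν) {s : Set ℝ}
    (hs : MeasurableSet s) : μ (X ⁻¹' s) = ν s := by
  rw [← hX, Measure.map_apply_of_aemeasurable (aemeasurable_of_map_neZero (hX ▸ ‹_›)) hs]

lemma hasSubgaussianMGF_id_gaussianReal (v : ℝ≥0) :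
    HasSubgaussianMGF id v (gaussianReal 0 v) where
  integrable_exp_mul := integrable_exp_mul_gaussianReal
  mgf_le t := by simp [mgf_id_gaussianReal]

lemma gaussianReal_Ici_le (v : ℝ≥0) {s : ℝ} (hs : 0 ≤ s) :
    gaussianReal 0 v (Ici s) ≤ ENNReal.ofReal (exp (-s ^ 2 / (2 * v))) := by
  rw [← ofReal_measureReal]
  exact ENNReal.ofReal_le_ofReal ((hasSubgaussianMGF_id_gaussianReal v).measure_ge_le hs)

lemma gammaPDFReal_eq_mul_exp_mul {a r t : ℝ} (hr : 0 < r) (ht : 0 ≤ t) (x : ℝ) :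
    gammaPDFReal a r x = (r / (r + t)) ^ a * exp (t * x) * gammaPDFReal a (r + t) x := by
  unfold gammaPDFReal
  split_ifs
  · have hrt : (r / (r + t)) ^ a * (r + t) ^ a = r ^ a := by
      rw [div_rpow hr.le (by positivity), div_mul_cancel₀ _ (by positivity)]
    have hexp : exp (t * x) * exp (-((r + t) * x)) = exp (-(r * x)) := by
      rw [← exp_add]; ring_nf
    rw [← hrt, ← hexp]
    ring
  · simp

lemma gammaMeasure_Iic_le {a r t : ℝ} (ha : 0 < a) (hr : 0 < r) (ht : 0 ≤ t) (x : ℝ) :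
    gammaMeasure a r (Iic x) ≤ ENNReal.ofReal ((r / (r + t)) ^ a * exp (t * x)) := by
  set C := (r / (r + t)) ^ a * exp (t * x)
  have hrt : 0 < r + t := by linarith
  have hpdf : ∀ y ∈ Iic x, gammaPDF a r y ≤ ENNReal.ofReal C * gammaPDF a (r + t) y := by
    intro y hy
    rw [gammaPDF, gammaPDF, ← ENNReal.ofReal_mul (by positivity),
      gammaPDFReal_eq_mul_exp_mul hr ht]
    refine ENNReal.ofReal_le_ofReal (mul_le_mul_of_nonneg_right ?_ (gammaPDFReal_nonneg ha hrt y))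
    exact mul_le_mul_of_nonneg_left (exp_le_exp.mpr (mul_le_mul_of_nonneg_left hy ht))
      (by positivity)
  rw [gammaMeasure, withDensity_apply _ measurableSet_Iic]
  calc ∫⁻ y in Iic x, gammaPDF a r y
      ≤ ∫⁻ y in Iic x, ENNReal.ofReal C * gammaPDF a (r + t) y :=
        setLIntegral_mono ((measurable_gammaPDFReal a _).ennreal_ofReal.const_mul _) hpdf
    _ = ENNReal.ofReal C * ∫⁻ y in Iic x, gammaPDF a (r + t) y :=
        lintegral_const_mul' _ _ ENNReal.ofReal_ne_top
    _ ≤ ENNReal.ofReal C * ∫⁻ y, gammaPDF a (r + t) y := by gcongr; exact Measure.restrict_le_self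
    _ = ENNReal.ofReal C := by rw [lintegral_gammaPDF_eq_one ha hrt, mul_one]

lemma gammaMeasure_half_Iic_quarter_le {k : ℝ} (hk : 0 < k) :
    gammaMeasure (k / 2) (1 / 2) (Iic (k / 4)) ≤ ENNReal.ofReal (exp (-(9 / 64) * k)) := by
  -- tilting to rate `2` gives `exp ((3 / 8 - log 2) * k)`, and `3 / 8 + 9 / 64 < log 2`
  refine (gammaMeasure_Iic_le (by positivity) (by norm_num) (by norm_num : (0 : ℝ) ≤ 3 / 2)
    (k / 4)).trans (ENNReal.ofReal_le_ofReal ?_)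
  have hquarter : ((1 / 2 : ℝ) / (1 / 2 + 3 / 2)) ^ (k / 2) = exp (-(log 2 * k)) := by
    rw [show (1 / 2 : ℝ) / (1 / 2 + 3 / 2) = 2⁻¹ ^ (2 : ℝ) by norm_num, ← rpow_mul (by norm_num),
      rpow_def_of_pos (by norm_num), log_inv]
    ring_nf
  rw [hquarter, ← exp_add, exp_le_exp]
  nlinarith [log_two_gt_d9]

lemma le_or_le_of_two_mul_le_div_sqrt {s z y k : ℝ} (hs : 0 ≤ s) (hk : 0 < k)
    (h : 2 * s ≤ z / √(y / k)) : s ≤ z ∨ y ≤ k / 4 := by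
  refine or_iff_not_imp_right.mpr fun hy ↦ ?_
  have hhalf : 1 / 2 < √(y / k) := by
    rw [lt_sqrt (by norm_num), lt_div_iff₀ hk]
    linarith
  have := (le_div_iff₀ (by linarith)).mp h
  nlinarith

theorem t_statistic_tail_bound_general
    {Ω : Type*} [MeasureSpace Ω]
    (n : ℕ) (α : ℝ) (hα : α ∈ Set.Ioo (0 : ℝ) 1)
    (Z Y : Ω → ℝ)
    (hZ : Measure.map Z ℙ = gaussianReal 0 1)
    (hY : Measure.map Y ℙ = gammaMeasure ((n : ℝ) / 2) (1 / 2))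
    (hn : (64 / 9) * Real.log (2 / α) ≤ (n : ℝ)) :
    ℙ {ω | Real.sqrt (8 * Real.log (2 / α)) ≤ Z ω / Real.sqrt (Y ω / n)} ≤
      ENNReal.ofReal α := by
  obtain ⟨hα0, hα1⟩ := hα
  set L := log (2 / α)
  have hL : 0 < L := log_pos (by rw [lt_div_iff₀ hα0]; linarith)
  have hn0 : (0 : ℝ) < n := by linarith
  have hexpL : exp (-L) = α / 2 := by rw [exp_neg, exp_log (by positivity), inv_div]
  have h8L : √(8 * L) = 2 * √(2 * L) := by
    rw [show 8 * L = 2 ^ 2 * (2 * L) by ring, sqrt_mul (by positivity), sqrt_sq zero_le_two]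
  have hsub : {ω | √(8 * L) ≤ Z ω / √(Y ω / n)} ⊆ Z ⁻¹' Ici √(2 * L) ∪ Y ⁻¹' Iic (n / 4) :=
    fun ω hω ↦ le_or_le_of_two_mul_le_div_sqrt (sqrt_nonneg _) hn0 (h8L ▸ hω)
  have hZtail : ℙ (Z ⁻¹' Ici √(2 * L)) ≤ ENNReal.ofReal (α / 2) := by
    rw [measure_preimage_eq_of_map_eq hZ measurableSet_Ici, ← hexpL]
    convert gaussianReal_Ici_le 1 (sqrt_nonneg (2 * L)) using 3
    rw [sq_sqrt (by positivity), NNReal.coe_one]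
    ring
  have hYtail : ℙ (Y ⁻¹' Iic (n / 4)) ≤ ENNReal.ofReal (α / 2) := by
    have : IsProbabilityMeasure (gammaMeasure ((n : ℝ) / 2) (1 / 2)) :=
      isProbabilityMeasure_gammaMeasure (by positivity) (by norm_num)
    rw [measure_preimage_eq_of_map_eq hY measurableSet_Iic, ← hexpL]
    exact (gammaMeasure_half_Iic_quarter_le hn0).trans
      (ENNReal.ofReal_le_ofReal (exp_le_exp.mpr (by linarith)))
  calc ℙ {ω | √(8 * L) ≤ Z ω / √(Y ω / n)}
      ≤ ℙ (Z ⁻¹' Ici √(2 * L)) + ℙ (Y ⁻¹' Iic (n / 4)) :=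
        (measure_mono hsub).trans (measure_union_le _ _)
    _ ≤ ENNReal.ofReal (α / 2) + ENNReal.ofReal (α / 2) := add_le_add hZtail hYtail
    _ = ENNReal.ofReal α := by rw [← ENNReal.ofReal_add (by positivity) (by positivity), add_halves]

/-- Tail bound for the t-statistic: if `Z ~ N(0,1)` and `Y ~ χ²(n)` are independent and
`n ≥ (64/9)·log(2/α)`, then `P(Z/√(Y/n) ≥ √(8 log(2/α))) ≤ α`. -/
theorem t_statistic_tail_bound
    {Ω : Type*} [MeasureSpace Ω] [IsProbabilityMeasure (ℙ : Measure Ω)]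
    (n : ℕ) (α : ℝ) (hα : α ∈ Set.Ioo (0 : ℝ) 1)
    (Z Y : Ω → ℝ)
    (hZ : Measure.map Z ℙ = gaussianReal 0 1)
    (hY : Measure.map Y ℙ = gammaMeasure ((n : ℝ) / 2) (1 / 2))
    (hind : IndepFun Z Y ℙ)
    (hn : (64 / 9) * Real.log (2 / α) ≤ (n : ℝ)) :
    ℙ {ω | Real.sqrt (8 * Real.log (2 / α)) ≤ Z ω / Real.sqrt (Y ω / n)} ≤
      ENNReal.ofReal α :=
  t_statistic_tail_bound_general n α hα Z Y hZ hY hn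
end

section
/- Let σ* ≤ σ with σ* > 0 and let Φ be the standard normal CDF. Then 2Φ(σ/σ*) − Φ(0) − Φ(2σ/σ*) ≥ 2Φ(1) − Φ(0) − Φ(2) ≥ 0.1. -/
open MeasureTheory Real Set

private noncomputable def gpdf (x : ℝ) : ℝ :=
  (Real.sqrt (2 * Real.pi))⁻¹ * Real.exp (-x ^ 2 / 2)

private lemma gpdf_cont : Continuous gpdf := by
  unfold gpdf
  exact continuous_const.mul (Real.continuous_exp.comp (by continuity))

private lemma gpdf_nonneg (x : ℝ) : 0 ≤ gpdf x := by
  unfold gpdf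
  positivity

private lemma gpdf_eq : gpdf = fun x => (Real.sqrt (2 * Real.pi))⁻¹ * Real.exp (-(1/2) * x ^ 2) := by
  funext x; unfold gpdf; ring_nf

private lemma gpdf_integrable : Integrable gpdf := by
  rw [gpdf_eq]
  exact (integrable_exp_neg_mul_sq (by norm_num : (0:ℝ) < 1/2)).const_mul _

private lemma gpdf_total : ∫ x, gpdf x = 1 := by
  rw [gpdf_eq]
  rw [MeasureTheory.integral_const_mul, integral_gaussian]
  have h : Real.sqrt (π / (1/2)) = Real.sqrt (2 * π) := by norm_num; ring_nf
  rw [h, inv_mul_cancel₀]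
  positivity

private lemma gpdf_half : ∫ x in Iic (0:ℝ), gpdf x = 1/2 := by
  have hsym : ∫ x in Iic (0:ℝ), gpdf x = ∫ x in Ioi (0:ℝ), gpdf x := by
    have : ∫ x in Ioi (0:ℝ), gpdf (-x) = ∫ x in Iic (-(0:ℝ)), gpdf x :=
      integral_comp_neg_Ioi 0 gpdf
    simp only [neg_zero] at this
    rw [← this]
    congr 1; funext x; unfold gpdf; rw [neg_pow]; ring_nf
  have htot : (∫ x in Iic (0:ℝ), gpdf x) + ∫ x in Ioi (0:ℝ), gpdf x = 1 := by
    rw [intervalIntegral.integral_Iic_add_Ioi gpdf_integrable.integrableOn gpdf_integrable.integrableOn,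
      gpdf_total]
  rw [← hsym] at htot; linarith

/-- For `0 < σ* ≤ σ` and `Φ` the standard normal CDF,
`2Φ(σ/σ*) − Φ(0) − Φ(2σ/σ*) ≥ 2Φ(1) − Φ(0) − Φ(2) ≥ 0.1`. -/
theorem bin_mass_gap
    (Φ : ℝ → ℝ)
    (hΦ : ∀ t, Φ t = ∫ x in Set.Iic t, (Real.sqrt (2 * Real.pi))⁻¹ * Real.exp (-x ^ 2 / 2))
    (σ σs : ℝ) (hσs : 0 < σs) (hle : σs ≤ σ) :
    2 * Φ (σ / σs) - Φ 0 - Φ (2 * σ / σs) ≥ 2 * Φ 1 - Φ 0 - Φ 2 ∧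
    2 * Φ 1 - Φ 0 - Φ 2 ≥ 0.1 := by
  have hΦ' : ∀ t, Φ t = ∫ x in Set.Iic t, gpdf x := hΦ
  have hint : ∀ a : ℝ, IntegrableOn gpdf (Iic a) := fun a => gpdf_integrable.integrableOn
  have hdiff : ∀ a b : ℝ, Φ b - Φ a = ∫ x in a..b, gpdf x := by
    intro a b
    rw [hΦ' a, hΦ' b, intervalIntegral.integral_Iic_sub_Iic (hint a) (hint b)]
  have ha1 : (1:ℝ) ≤ σ / σs := (one_le_div hσs).mpr hle
  set a := σ / σs with hadef
  constructor
  · -- first inequality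
    have key : 2 * (Φ a - Φ 1) - (Φ (2 * a) - Φ 2) ≥ 0 := by
      rw [hdiff, hdiff]
      have hsub : (∫ x in (2:ℝ)..(2*a), gpdf x) = 2 * ∫ x in (1:ℝ)..a, gpdf (2 * x) := by
        have := intervalIntegral.integral_comp_mul_left (a := (1:ℝ)) (b := a) gpdf
          (two_ne_zero (α := ℝ))
        rw [this]
        simp [mul_one]
      rw [hsub]
      have hii1 : IntervalIntegrable gpdf volume 1 a := gpdf_cont.intervalIntegrable _ _
      have hii2 : IntervalIntegrable (fun x => gpdf (2 * x)) volume 1 a :=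
        (gpdf_cont.comp (by continuity)).intervalIntegrable _ _
      have h2 : 2 * (∫ x in (1:ℝ)..a, gpdf x) - 2 * (∫ x in (1:ℝ)..a, gpdf (2*x))
          = 2 * ∫ x in (1:ℝ)..a, (gpdf x - gpdf (2*x)) := by
        rw [intervalIntegral.integral_sub hii1 hii2]; ring
      rw [h2]
      have hpos : 0 ≤ ∫ x in (1:ℝ)..a, (gpdf x - gpdf (2*x)) := by
        apply intervalIntegral.integral_nonneg ha1
        intro x hx
        have hx1 : (1:ℝ) ≤ x := hx.1
        have : gpdf (2*x) ≤ gpdf x := by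
          unfold gpdf
          apply mul_le_mul_of_nonneg_left _ (by positivity)
          apply Real.exp_le_exp.mpr
          nlinarith
        linarith
      linarith
    have h2a : 2 * σ / σs = 2 * a := by rw [hadef]; ring
    rw [h2a]
    linarith
  · -- numeric bound
    have hΦ2 : Φ 2 ≤ 1 := by
      rw [hΦ' 2, ← gpdf_total]
      exact setIntegral_le_integral gpdf_integrable
        (Filter.Eventually.of_forall gpdf_nonneg)
    have hΦ0 : Φ 0 = 1/2 := by rw [hΦ' 0]; exact gpdf_half
    have hΦ1 : Φ 1 ≥ 1/2 + (Real.sqrt (2*π))⁻¹ * (5/6) := by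
      have h10 : Φ 1 - Φ 0 = ∫ x in (0:ℝ)..1, gpdf x := hdiff 0 1
      have hlow : (∫ x in (0:ℝ)..1, gpdf x)
          ≥ ∫ x in (0:ℝ)..1, (Real.sqrt (2*π))⁻¹ * (1 - x^2/2) := by
        apply intervalIntegral.integral_mono_on (by norm_num)
          ((by continuity : Continuous fun x : ℝ => (Real.sqrt (2*π))⁻¹ * (1 - x^2/2)).intervalIntegrable _ _)
          (gpdf_cont.intervalIntegrable _ _)
        intro x _
        unfold gpdf
        apply mul_le_mul_of_nonneg_left _ (by positivity)
        have := Real.add_one_le_exp (-x^2/2)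
        linarith
      have hcomp : (∫ x in (0:ℝ)..1, (Real.sqrt (2*π))⁻¹ * (1 - x^2/2))
          = (Real.sqrt (2*π))⁻¹ * (5/6) := by
        rw [intervalIntegral.integral_const_mul]
        have : (∫ x in (0:ℝ)..1, (1 - x^2/2)) = 5/6 := by
          have h1 : (∫ x in (0:ℝ)..1, (1 - x^2/2))
              = (∫ x in (0:ℝ)..1, (1:ℝ)) - ∫ x in (0:ℝ)..1, x^2/2 := by
            apply intervalIntegral.integral_sub intervalIntegrable_const
            exact ((by continuity : Continuous fun x:ℝ => x^2/2).intervalIntegrable _ _)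
          rw [h1]
          simp only [intervalIntegral.integral_const, smul_eq_mul]
          have h2 : (∫ x in (0:ℝ)..1, x^2/2) = (∫ x in (0:ℝ)..1, x^2)/2 := by
            rw [intervalIntegral.integral_div]
          rw [h2, integral_pow]
          norm_num
        rw [this]
      rw [hΦ0] at h10
      rw [hcomp] at hlow
      linarith
    have hc : (Real.sqrt (2*π))⁻¹ ≥ 0.36 := by
      have hb : Real.sqrt (2*π) ≤ 25/9 := by
        rw [show (25/9:ℝ) = Real.sqrt ((25/9)^2) from (Real.sqrt_sq (by norm_num)).symm]
        apply Real.sqrt_le_sqrt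
        nlinarith [Real.pi_lt_d2]
      have hpos : 0 < Real.sqrt (2*π) := by positivity
      rw [ge_iff_le, show (0.36:ℝ) = (25/9:ℝ)⁻¹ by norm_num]
      exact inv_anti₀ hpos hb
    rw [hΦ0]
    nlinarith [hΦ1, hΦ2, hc]
end
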